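/- arXiv:cs/0208041 — 5 statements merged into one kernel-verified Lean document; each statement's English description precedes it below -/
import Mathlib

section
/- Let V be a finite type, D a directed graph on V (a relation giving the directed edges), and A, B distinct vertices of V such that there is no edge from A directly to B. For every natural number k, the following are equivalent: (a) A and B are not 2k-separable, i.e., there is no set W ⊆ V∖{A,B} with |W| ≤ 2k such that every directed path from A to B contains a vertex of W; (b) there exist 2k+1 directed paths from A to B that are pairwise internally vertex-disjoint (no two of them share a vertex other than A and B). -/
/-!
After deleting `A` and `B`, internally disjoint `A`–`B` dipaths become disjoint walks in the
digraph induced on `V ∖ {A, B}` from the out-neighbours of `A` to the in-neighbours of `B`, and,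
as `A` and `B` are distinct and not adjacent, a vertex set separates `A` from `B` exactly when it
separates these two sets there. This is the vertex form of Menger's theorem for two vertex sets
`S` and `T`, proved by induction on the number of edges (Böhme–Göring–Harant). If deleting an
edge `xy` leaves an `S`–`T` separator `R₀` with `|R₀| < n`, then in `G - xy` every separator
between `S` and `R₀ ∪ {x}`, and every separator between `R₀ ∪ {y}` and `T`, still separates `S`
from `T` in `G`; so induction gives `n` disjoint walks from `S` to `R₀ ∪ {x}` and `n` from
`R₀ ∪ {y}` to `T`. Cut at their first, resp. last, visit of these sets, a walk of the first family
and one of the second can meet only at a common end in `R₀`, because `R₀` separates. Hence they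
join up, the walk ending at `x` with the one starting at `y` through `xy`, into `n` disjoint
`S`–`T` walks. Shortcutting repeated vertices turns walks back into dipaths.
-/

/-- `l` is a directed path from `A` to `B` in the directed graph given by the
edge relation `D`: the full vertex sequence `A = v₀, …, v_m = B` consists of
distinct vertices with a directed edge between consecutive ones. -/
def IsDipath {V : Type*} (D : V → V → Prop) (A B : V) (l : List V) : Prop :=
  l.Chain' D ∧ l.head? = some A ∧ l.getLast? = some B ∧ l.Nodup

namespace List

variable {α : Type*}

theorem exists_eq_append_cons_first_mem {X : Set α} {l : List α} (h : ∃ u ∈ l, u ∈ X) :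
    ∃ p b t, l = p ++ b :: t ∧ b ∈ X ∧ ∀ u ∈ p, u ∉ X := by
  classical
  obtain ⟨b, hb⟩ := Option.isSome_iff_exists.1 (find?_isSome.2 (by simpa using h) :
    (l.find? (· ∈ X)).isSome)
  obtain ⟨hbX, p, t, rfl, hp⟩ := find?_eq_some_iff_append.1 hb
  exact ⟨p, b, t, rfl, by simpa using hbX, by simpa using hp⟩

theorem exists_eq_append_cons_last_mem {X : Set α} {l : List α} (h : ∃ u ∈ l, u ∈ X) :
    ∃ s a q, l = s ++ a :: q ∧ a ∈ X ∧ ∀ u ∈ q, u ∉ X := by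
  obtain ⟨p, a, t, hl, ha, hp⟩ :=
    exists_eq_append_cons_first_mem (l := l.reverse) (by simpa using h)
  exact ⟨t.reverse, a, p.reverse, by simpa using congrArg reverse hl, ha, by simpa using hp⟩

end List

open List Relation Function

section Linkage

variable {V : Type*} {r r' : V → V → Prop} {S T X Y : Set V} {l : List V}

/-- A walk may stay put at a vertex (`ReflGen r`), so that two walks through a common vertex can
be concatenated there. -/
def IsWalk (r : V → V → Prop) (S T : Set V) (l : List V) : Prop :=
  l.IsChain (ReflGen r) ∧ (∃ a ∈ l.head?, a ∈ S) ∧ ∃ b ∈ l.getLast?, b ∈ T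

def Separates (r : V → V → Prop) (S T : Set V) (R : Finset V) : Prop :=
  ∀ l, IsWalk r S T l → ∃ v ∈ l, v ∈ R

def IsLinkage (r : V → V → Prop) (S T : Set V) {ι : Type*} (p : ι → List V) : Prop :=
  (∀ i, IsWalk r S T (p i)) ∧ Pairwise (List.Disjoint on p)

def deleteEdge (r : V → V → Prop) (x y a b : V) : Prop :=
  r a b ∧ ¬(a = x ∧ b = y)

theorem deleteEdge_le (r : V → V → Prop) (x y : V) : deleteEdge r x y ≤ r :=
  fun _ _ h => h.1

theorem IsWalk.mono (h : r' ≤ r) (hl : IsWalk r' S T l) : IsWalk r S T l :=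
  ⟨hl.1.imp (ReflGen.mono h), hl.2⟩

theorem IsLinkage.mono {ι : Type*} {p : ι → List V} (h : r' ≤ r) (hp : IsLinkage r' S T p) :
    IsLinkage r S T p :=
  ⟨fun i => (hp.1 i).mono h, hp.2⟩

theorem IsWalk.append {l₁ l₂ : List V} (h₁ : IsWalk r S X l₁) (h₂ : IsWalk r Y T l₂)
    (h : ∀ a ∈ l₁.getLast?, ∀ b ∈ l₂.head?, ReflGen r a b) : IsWalk r S T (l₁ ++ l₂) := by
  obtain ⟨hc₁, ⟨a, ha, haS⟩, -⟩ := h₁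
  obtain ⟨hc₂, -, b, hb, hbT⟩ := h₂
  refine ⟨hc₁.append hc₂ h, ⟨a, ?_, haS⟩, b, ?_, hbT⟩
  · simp_all [head?_append]
  · simp_all [getLast?_append]

theorem IsWalk.exists_mem_left (hl : IsWalk r S T l) : ∃ u ∈ l, u ∈ S :=
  let ⟨_, ⟨a, ha, haS⟩, _⟩ := hl
  ⟨a, mem_of_mem_head? ha, haS⟩

theorem IsWalk.exists_mem_right (hl : IsWalk r S T l) : ∃ u ∈ l, u ∈ T :=
  let ⟨_, _, b, hb, hbT⟩ := hl
  ⟨b, mem_of_getLast? hb, hbT⟩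

theorem isChain_deleteEdge_of_notMem_dropLast {x y : V} (hl : l.IsChain (ReflGen r))
    (hx : x ∉ l.dropLast) : l.IsChain (ReflGen (deleteEdge r x y)) := by
  induction hl with
  | nil => exact .nil
  | singleton a => exact .singleton a
  | cons_cons hab _ ih =>
    simp only [dropLast_cons_cons, mem_cons, not_or] at hx
    refine .cons_cons ?_ (ih hx.2)
    rcases hab with _ | hab
    exacts [.refl, .single ⟨hab, fun h => hx.1 h.1.symm⟩]

theorem isChain_deleteEdge_of_notMem_tail {x y : V} (hl : l.IsChain (ReflGen r))
    (hy : y ∉ l.tail) : l.IsChain (ReflGen (deleteEdge r x y)) := by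
  induction hl with
  | nil => exact .nil
  | singleton a => exact .singleton a
  | cons_cons hab _ ih =>
    simp only [tail_cons, mem_cons, not_or] at hy ih
    refine .cons_cons ?_ (ih hy.2)
    rcases hab with _ | hab
    exacts [.refl, .single ⟨hab, fun h => hy.1 h.2.symm⟩]

theorem IsWalk.concat_of_append_cons {p t : List V} {b : V} (hl : IsWalk r S T (p ++ b :: t))
    (hb : b ∈ X) : IsWalk r S X (p ++ [b]) := by
  obtain ⟨a, ha, haS⟩ := hl.2.1
  exact ⟨hl.1.prefix ⟨t, by simp⟩, ⟨a, by cases p <;> simp_all, haS⟩, b, by simp, hb⟩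

theorem IsWalk.cons_of_append_cons {s q : List V} {a : V} (hl : IsWalk r S T (s ++ a :: q))
    (ha : a ∈ Y) : IsWalk r Y T (a :: q) := by
  obtain ⟨b, hb, hbT⟩ := hl.2.2
  exact ⟨hl.1.suffix ⟨s, rfl⟩, ⟨a, by simp, ha⟩, b, by simp_all [getLast?_append], hbT⟩

theorem IsWalk.exists_prefix (hl : IsWalk r S T l) (hX : ∃ u ∈ l, u ∈ X) :
    ∃ p b, IsWalk r S X (p ++ [b]) ∧ (∀ u ∈ p, u ∉ X) ∧ p ++ [b] ⊆ l := by
  obtain ⟨p, b, t, rfl, hb, hp⟩ := exists_eq_append_cons_first_mem hX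
  exact ⟨p, b, hl.concat_of_append_cons hb, hp, (prefix_append_right_inj p).2 (by simp) |>.subset⟩

theorem IsWalk.exists_suffix (hl : IsWalk r S T l) (hY : ∃ u ∈ l, u ∈ Y) :
    ∃ a q, IsWalk r Y T (a :: q) ∧ (∀ u ∈ q, u ∉ Y) ∧ a :: q ⊆ l := by
  obtain ⟨s, a, q, rfl, ha, hq⟩ := exists_eq_append_cons_last_mem hY
  exact ⟨a, q, hl.cons_of_append_cons ha, hq, (suffix_append s _).subset⟩

theorem Separates.of_deleteEdge_left [DecidableEq V] {x y : V} {R₀ R : Finset V}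
    (hR₀ : Separates (deleteEdge r x y) S T R₀)
    (hR : Separates (deleteEdge r x y) S ↑(insert x R₀) R) : Separates r S T R := by
  intro l hl
  have hX : ∃ u ∈ l, u ∈ (↑(insert x R₀) : Set V) := by
    by_contra! hl'
    obtain ⟨u, hu, huR⟩ := hR₀ l ⟨isChain_deleteEdge_of_notMem_dropLast hl.1
      fun hx => hl' x (dropLast_subset _ hx) (by simp), hl.2⟩
    exact hl' u hu (by simp [huR])
  obtain ⟨p, b, hw, hp, hsub⟩ := hl.exists_prefix hX
  obtain ⟨u, hu, huR⟩ := hR _ ⟨isChain_deleteEdge_of_notMem_dropLast hw.1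
    (by simpa using fun hx => hp x hx (by simp)), hw.2⟩
  exact ⟨u, hsub hu, huR⟩

theorem Separates.of_deleteEdge_right [DecidableEq V] {x y : V} {R₀ R : Finset V}
    (hR₀ : Separates (deleteEdge r x y) S T R₀)
    (hR : Separates (deleteEdge r x y) ↑(insert y R₀) T R) : Separates r S T R := by
  intro l hl
  have hY : ∃ u ∈ l, u ∈ (↑(insert y R₀) : Set V) := by
    by_contra! hl'
    obtain ⟨u, hu, huR⟩ := hR₀ l ⟨isChain_deleteEdge_of_notMem_tail hl.1
      fun hy => hl' y (tail_subset _ hy) (by simp), hl.2⟩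
    exact hl' u hu (by simp [huR])
  obtain ⟨a, q, hw, hq, hsub⟩ := hl.exists_suffix hY
  obtain ⟨u, hu, huR⟩ := hR _ ⟨isChain_deleteEdge_of_notMem_tail hw.1
    (by simpa using fun hy => hq y hy (by simp)), hw.2⟩
  exact ⟨u, hsub hu, huR⟩

theorem Separates.mem_of_mem_of_mem {R : Finset V} (hR : Separates r S T R) {p q : List V}
    {a b v : V} (hP : IsWalk r S X (p ++ [b])) (hp : ∀ u ∈ p, u ∉ R)
    (hQ : IsWalk r Y T (a :: q)) (hq : ∀ u ∈ q, u ∉ R) (hvP : v ∈ p ++ [b])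
    (hvQ : v ∈ a :: q) : v ∈ R ∧ v = b ∧ v = a := by
  obtain ⟨p₁, p₂, hp₁⟩ := append_of_mem hvP
  obtain ⟨q₁, q₂, hq₂⟩ := append_of_mem hvQ
  -- The walk following the first one up to `v` and the second from `v` on meets `R`, and away
  -- from `v` it runs through `p` and `q`, which avoid `R`.
  have hw : IsWalk r S T ((p₁ ++ [v]) ++ (v :: q₂)) := by
    refine IsWalk.append (X := Set.univ) (Y := Set.univ) ?_ ?_ (by simp [ReflGen.refl])
    · exact (hp₁ ▸ hP).concat_of_append_cons trivial
    · exact (hq₂ ▸ hQ).cons_of_append_cons trivial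
  have hvR : v ∈ R := by
    obtain ⟨u, hu, huR⟩ := hR _ hw
    simp only [mem_append, mem_cons, not_mem_nil, or_false] at hu
    rcases hu with (hu | rfl) | rfl | hu
    · refine absurd huR (hp u ?_)
      have : p = p₁ ++ (v :: p₂).dropLast := by
        simpa [dropLast_append_cons] using congrArg dropLast hp₁
      exact this ▸ mem_append_left _ hu
    · exact huR
    · exact huR
    · refine absurd huR (hq u ?_)
      have := congrArg tail hq₂
      cases q₁ <;> simp_all
  refine ⟨hvR, ?_, ?_⟩
  · simpa using (mem_append.1 hvP).resolve_left fun h => hp v h hvR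
  · exact (mem_cons.1 hvQ).resolve_right fun h => hq v h hvR

theorem exists_injective_matching [DecidableEq V] {n : ℕ} {R : Finset V} {x y : V}
    {a b : Fin n → V} (hn : R.card < n) (ha : Injective a) (hb : Injective b)
    (haY : ∀ j, a j ∈ insert y R) (hbX : ∀ i, b i ∈ insert x R) :
    y ∉ R ∧ ∃ σ : Fin n → Fin n, Injective σ ∧ ∀ i, a (σ i) = if b i = x then y else b i := by
  have himage : Finset.univ.image a = insert y R := by
    refine Finset.eq_of_subset_of_card_le (by simpa [Finset.image_subset_iff] using haY) ?_
    rw [Finset.card_image_of_injective _ ha, Finset.card_univ, Fintype.card_fin]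
    exact (Finset.card_insert_le _ _).trans hn
  have hy : y ∉ R := fun hy => by
    have := congrArg Finset.card himage
    rw [Finset.card_image_of_injective _ ha, Finset.card_univ, Fintype.card_fin,
      Finset.insert_eq_of_mem hy] at this
    omega
  have hsurj : ∀ v ∈ insert y R, ∃ j, a j = v := fun v hv => by simpa [← himage] using hv
  choose σ hσ using fun i => hsurj (if b i = x then y else b i) (by
    have := hbX i
    split_ifs <;> simp_all)
  refine ⟨hy, σ, fun i j hij => hb ?_, hσ⟩
  have h := hσ i ▸ hσ j ▸ congrArg a hij
  have hi := hbX i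
  have hj := hbX j
  split_ifs at h <;> simp_all

theorem IsLinkage.exists_join [DecidableEq V] {n : ℕ} {R₀ : Finset V} {x y : V}
    (hxy : r x y) (hr : r' ≤ r) (hR₀ : Separates r' S T R₀) (hn : R₀.card < n)
    {P Q : Fin n → List V} (hP : IsLinkage r' S ↑(insert x R₀) P)
    (hQ : IsLinkage r' ↑(insert y R₀) T Q) : ∃ p : Fin n → List V, IsLinkage r S T p := by
  choose p b hpw hpX hpP using fun i => (hP.1 i).exists_prefix (hP.1 i).exists_mem_right
  choose a q hqw hqY hqQ using fun j => (hQ.1 j).exists_suffix (hQ.1 j).exists_mem_left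
  have hb : Injective b := fun i j h => by
    by_contra hij
    exact hP.2 hij (hpP i (by simp) : b i ∈ P i) (hpP j (by simp [h]))
  have ha : Injective a := fun i j h => by
    by_contra hij
    exact hQ.2 hij (hqQ i (by simp) : a i ∈ Q i) (hqQ j (by simp [h]))
  obtain ⟨hy, σ, hσ, hσa⟩ := exists_injective_matching hn ha hb
    (fun j => by simpa using (hqw j).2.1) (fun i => by simpa using (hpw i).2.2)
  have cross : ∀ i j v, v ∈ p i ++ [b i] → v ∈ a (σ j) :: q (σ j) → i = j := by
    intro i j v hvP hvQ
    obtain ⟨hvR, rfl, hv⟩ := hR₀.mem_of_mem_of_mem (hpw i)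
      (fun u hu huR => hpX i u hu (by simp [huR])) (hqw (σ j))
      (fun u hu huR => hqY _ u hu (by simp [huR])) hvP hvQ
    rw [hσa] at hv
    split_ifs at hv
    · exact absurd (hv ▸ hvR) hy
    · exact hb hv
  refine ⟨fun i => (p i ++ [b i]) ++ (a (σ i) :: q (σ i)), fun i => ?_, fun i j hij => ?_⟩
  · refine ((hpw i).mono hr).append ((hqw (σ i)).mono hr) ?_
    simp only [getLast?_concat, head?_cons, Option.mem_def, Option.some.injEq, hσa]
    rintro _ rfl _ rfl
    split_ifs with hbx
    exacts [.single (hbx ▸ hxy), .refl]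
  · intro v hvi hvj
    rw [mem_append] at hvi hvj
    rcases hvi with hvi | hvi <;> rcases hvj with hvj | hvj
    · exact hP.2 hij (hpP i hvi) (hpP j hvj)
    · exact hij (cross i j v hvi hvj)
    · exact hij (cross j i v hvj hvi).symm
    · exact hQ.2 (hσ.ne hij) (hqQ _ hvi) (hqQ _ hvj)

theorem exists_linkage_of_forall_not_rel [Finite V] (hr : ∀ a b, ¬ r a b) {n : ℕ}
    (h : ∀ R : Finset V, Separates r S T R → n ≤ R.card) :
    ∃ p : Fin n → List V, IsLinkage r S T p := by
  set R := (S ∩ T).toFinite.toFinset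
  have hsep : Separates r S T R := by
    rintro l ⟨hl, ⟨a, ha, haS⟩, b, hb, hbT⟩
    have hconst : ∀ u ∈ l, u = a := IsChain.induction (· = a) l hl
      (fun u w huw hu => by rcases huw with _ | huw; exacts [hu, absurd huw (hr u w)])
      (fun hne => by simpa [head?_eq_some_head hne] using ha)
    obtain rfl := hconst b (mem_of_getLast? hb)
    exact ⟨b, mem_of_getLast? hb, by simpa [R] using ⟨haS, hbT⟩⟩
  obtain ⟨f⟩ := Function.Embedding.nonempty_of_card_le (α := Fin n) (β := R)
    (by simpa using h R hsep)
  refine ⟨fun i => [(f i : V)], fun i => ?_, fun i j hij => by simpa using f.injective.ne hij.symm⟩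
  have hfi := (f i).2
  simp only [R, Set.Finite.mem_toFinset, Set.mem_inter_iff] at hfi
  exact ⟨.singleton _, ⟨f i, rfl, hfi.1⟩, f i, rfl, hfi.2⟩

theorem exists_linkage_of_forall_le_card [Finite V] (r : V → V → Prop) (S T : Set V) (n : ℕ)
    (h : ∀ R : Finset V, Separates r S T R → n ≤ R.card) :
    ∃ p : Fin n → List V, IsLinkage r S T p := by
  classical
  induction hN : {e : V × V | r e.1 e.2}.ncard using Nat.strong_induction_on generalizing r S T
    with | _ N ih =>
  by_cases hr : ∃ x y, r x y
  swap
  · push Not at hr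
    exact exists_linkage_of_forall_not_rel hr h
  obtain ⟨x, y, hxy⟩ := hr
  have hlt : {e : V × V | deleteEdge r x y e.1 e.2}.ncard < N := by
    rw [← hN]
    convert Set.ncard_sdiff_singleton_lt_of_mem (s := {e : V × V | r e.1 e.2}) (a := (x, y)) hxy
    ext ⟨a, b⟩
    simp [deleteEdge]
  by_cases hbig : ∀ R : Finset V, Separates (deleteEdge r x y) S T R → n ≤ R.card
  · obtain ⟨p, hp⟩ := ih _ hlt _ _ _ hbig rfl
    exact ⟨p, hp.mono (deleteEdge_le r x y)⟩
  push Not at hbig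
  obtain ⟨R₀, hR₀, hn⟩ := hbig
  obtain ⟨P, hP⟩ := ih _ hlt _ _ _ (fun R hR => h R (hR₀.of_deleteEdge_left hR)) rfl
  obtain ⟨Q, hQ⟩ := ih _ hlt _ _ _ (fun R hR => h R (hR₀.of_deleteEdge_right hR)) rfl
  exact hP.exists_join hxy (deleteEdge_le r x y) hR₀ hn hQ

end Linkage

section Dipath

variable {V : Type*} {D : V → V → Prop}

theorem IsDipath.cons_of_append_cons {A B C : V} {s u : List V}
    (hl : IsDipath D A B (s ++ C :: u)) : IsDipath D C B (C :: u) :=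
  ⟨hl.1.suffix ⟨s, rfl⟩, rfl, by simpa [getLast?_append] using hl.2.2.1,
    hl.2.2.2.sublist (sublist_append_right s _)⟩

theorem exists_isDipath_subset {A B : V} {t : List V} (hl : (A :: t).IsChain (ReflGen D))
    (hB : (A :: t).getLast? = some B) : ∃ l, IsDipath D A B l ∧ l ⊆ A :: t := by
  induction t generalizing A with
  | nil => exact ⟨[A], ⟨.singleton A, rfl, hB, nodup_singleton A⟩, Subset.refl _⟩
  | cons b t ih =>
    obtain ⟨hAb, hbt⟩ := isChain_cons_cons.1 hl
    obtain ⟨l, hl, hsub⟩ := ih hbt (by simpa using hB)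
    by_cases hA : A ∈ l
    · obtain ⟨s, u, rfl⟩ := append_of_mem hA
      exact ⟨A :: u, hl.cons_of_append_cons, cons_subset_cons A fun v hv => hsub (by simp [hv])⟩
    obtain ⟨hc, hh, hlast, hnd⟩ := hl
    obtain ⟨l, rfl⟩ := head?_eq_some_iff.1 hh
    have hAb' : D A b := by
      rcases hAb with _ | hAb
      exacts [absurd (mem_cons_self ..) hA, hAb]
    exact ⟨A :: b :: l, ⟨hc.cons_cons hAb', rfl, by simpa using hlast, nodup_cons.2 ⟨hA, hnd⟩⟩,
      cons_subset_cons A hsub⟩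

variable {A B : V}

theorem Relation.ReflGen.subtype_val {p : V → Prop} {u w : Subtype p}
    (h : ReflGen (fun u w : Subtype p => D u w) u w) : ReflGen D u w := by
  rcases h with _ | h
  exacts [.refl, .single h]

theorem Separates.exists_mem_of_isDipath (hAB : A ≠ B) (hDAB : ¬ D A B)
    {R : Finset {v // v ≠ A ∧ v ≠ B}}
    (hR : Separates (fun u w : {v // v ≠ A ∧ v ≠ B} => D u w) {u | D A u} {u | D u B} R)
    {l : List V} (hl : IsDipath D A B l) : ∃ v ∈ R.map (Embedding.subtype _), v ∈ l := by
  obtain ⟨hc, hA, hB, hnd⟩ := hl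
  obtain ⟨t, rfl⟩ := head?_eq_some_iff.1 hA
  obtain ⟨m, rfl⟩ : ∃ m, t = m ++ [B] := by
    refine getLast?_eq_some_iff.1 ?_
    cases t with
    | nil => exact absurd (by simpa using hB) hAB
    | cons => simpa using hB
  have hmAB : ∀ v ∈ m, v ≠ A ∧ v ≠ B := by
    simp only [nodup_cons, mem_append, nodup_append, mem_singleton] at hnd
    exact fun v hv => ⟨fun h => hnd.1 (.inl (h ▸ hv)), fun h => hnd.2.2.2 v hv B rfl h⟩
  lift m to List {v // v ≠ A ∧ v ≠ B} using hmAB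
  cases m with
  | nil => exact absurd (isChain_cons_cons.1 hc).1 hDAB
  | cons u m =>
    simp only [map_cons, cons_append] at hc
    obtain ⟨hAu, hc⟩ := isChain_cons_cons.1 hc
    rw [← cons_append, ← map_cons, isChain_append] at hc
    obtain ⟨b, hb⟩ := Option.isSome_iff_exists.1 (by simp : (u :: m).getLast?.isSome)
    obtain ⟨w, hw, hwR⟩ := hR (u :: m) ⟨(isChain_map _).1 hc.1 |>.imp fun _ _ => .single,
      ⟨u, rfl, hAu⟩, b, hb, hc.2.2 b (by rw [getLast?_map, hb]; rfl) B rfl⟩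
    exact ⟨w, Finset.mem_map_of_mem _ hwR,
      mem_cons_of_mem A (mem_append_left _ (mem_map_of_mem hw))⟩

theorem IsWalk.exists_isDipath {m : List {v // v ≠ A ∧ v ≠ B}}
    (hm : IsWalk (fun u w : {v // v ≠ A ∧ v ≠ B} => D u w) {u | D A u} {u | D u B} m) :
    ∃ l, IsDipath D A B l ∧ l ⊆ A :: (m.map Subtype.val ++ [B]) := by
  obtain ⟨hc, ⟨a, ha, hAa⟩, b, hb, hbB⟩ := hm
  refine exists_isDipath_subset ?_ (by rw [← cons_append, getLast?_concat])
  obtain ⟨m, rfl⟩ := head?_eq_some_iff.1 ha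
  refine isChain_cons.2 ⟨by simpa using ReflGen.single (r := D) hAa, ?_⟩
  refine ((isChain_map _).2 (hc.imp fun _ _ h => h.subtype_val)).append (.singleton B) ?_
  intro x hx y hy
  simp only [getLast?_map, Option.mem_def.1 hb, Option.map_some, Option.mem_def, Option.some.injEq,
    head?_cons] at hx hy
  exact hx ▸ hy ▸ .single hbB

end Dipath

section Menger

variable {V : Type*} {D : V → V → Prop} {A B : V}

theorem exists_internally_disjoint_dipaths [Finite V] (hAB : A ≠ B) (hDAB : ¬ D A B) {n : ℕ}
    (h : ∀ W : Finset V, A ∉ W → B ∉ W → (∀ l, IsDipath D A B l → ∃ v ∈ W, v ∈ l) → n ≤ W.card) :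
    ∃ p : Fin n → List V, (∀ i, IsDipath D A B (p i)) ∧
      ∀ i j, i ≠ j → ∀ v, v ∈ p i → v ∈ p j → v = A ∨ v = B := by
  obtain ⟨m, hm, hmd⟩ := exists_linkage_of_forall_le_card (fun u w : {v // v ≠ A ∧ v ≠ B} => D u w)
    {u | D A u} {u | D u B} n fun R hR => by
      simpa using h (R.map (Embedding.subtype _)) (by simp) (by simp)
        fun l hl => hR.exists_mem_of_isDipath hAB hDAB hl
  choose p hp hpm using fun i => (hm i).exists_isDipath
  refine ⟨p, hp, fun i j hij v hvi hvj => ?_⟩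
  by_contra! hv
  have hi := hpm i hvi
  have hj := hpm j hvj
  simp only [mem_cons, mem_append, mem_map, not_mem_nil, hv.1, hv.2, false_or, or_false] at hi hj
  obtain ⟨u, hui, rfl⟩ := hi
  obtain ⟨w, hwj, hwu⟩ := hj
  exact hmd hij hui (Subtype.ext hwu ▸ hwj)

theorem card_le_of_internally_disjoint_dipaths {n : ℕ} {p : Fin n → List V}
    (hp : ∀ i, IsDipath D A B (p i))
    (hd : ∀ i j, i ≠ j → ∀ v, v ∈ p i → v ∈ p j → v = A ∨ v = B) {W : Finset V} (hA : A ∉ W)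
    (hB : B ∉ W) (hW : ∀ l, IsDipath D A B l → ∃ v ∈ W, v ∈ l) : n ≤ W.card := by
  choose v hvW hvp using fun i => hW _ (hp i)
  have hinj : Injective v := fun i j hij => by
    by_contra hne
    rcases hd i j hne _ (hvp i) (hij ▸ hvp j) with h | h
    · exact hA (h ▸ hvW i)
    · exact hB (h ▸ hvW i)
  simpa using Finset.card_le_card_of_injOn (s := Finset.univ) v (fun i _ => hvW i) hinj.injOn

end Menger

theorem not_two_k_separable_iff_disjoint_paths_general
    {V : Type*} [Fintype V]
    (D : V → V → Prop) (A B : V) (hAB : A ≠ B) (hnoEdge : ¬ D A B) (k : ℕ) :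
    (¬ ∃ W : Finset V, A ∉ W ∧ B ∉ W ∧ W.card ≤ 2 * k ∧
        ∀ l : List V, IsDipath D A B l → ∃ v ∈ W, v ∈ l) ↔
      (∃ p : Fin (2 * k + 1) → List V,
        (∀ i, IsDipath D A B (p i)) ∧
        ∀ i j, i ≠ j → ∀ v, v ∈ p i → v ∈ p j → v = A ∨ v = B) := by
  constructor
  · intro hsep
    refine exists_internally_disjoint_dipaths hAB hnoEdge fun W hA hB hW => ?_
    by_contra! hcard
    exact hsep ⟨W, hA, hB, by omega, hW⟩
  · rintro ⟨p, hp, hd⟩ ⟨W, hA, hB, hcard, hW⟩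
    have := card_le_of_internally_disjoint_dipaths hp hd hA hB hW
    omega

/-- Menger-type theorem: `A` and `B` are not `2k`-separable iff there exist
`2k+1` directed paths from `A` to `B` that are pairwise internally
vertex-disjoint. -/
theorem not_two_k_separable_iff_disjoint_paths
    {V : Type*} [Fintype V] [DecidableEq V]
    (D : V → V → Prop) (A B : V) (hAB : A ≠ B) (hnoEdge : ¬ D A B) (k : ℕ) :
    (¬ ∃ W : Finset V, A ∉ W ∧ B ∉ W ∧ W.card ≤ 2 * k ∧
        ∀ l : List V, IsDipath D A B l → ∃ v ∈ W, v ∈ l) ↔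
      (∃ p : Fin (2 * k + 1) → List V,
        (∀ i, IsDipath D A B (p i)) ∧
        ∀ i j, i ≠ j → ∀ v, v ∈ p i → v ∈ p j → v = A ∨ v = B) :=
  not_two_k_separable_iff_disjoint_paths_general D A B hAB hnoEdge k
end

section
/- Let G be a finite simple graph with vertex set V, let A and B be distinct non-adjacent vertices, and let k ≥ 1. If A and B are weakly k-hyper-connected in G, then A and B are k-connected in G, i.e., there exist k pairwise internally disjoint paths between A and B in G. -/
open SimpleGraph

/-- The closed neighborhood `N[x]` is disjoint from `S`. -/
def ClosedNbhdDisj {V : Type*} (G : SimpleGraph V) (S : Finset V) (x : V) : Prop :=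
  ∀ u ∈ S, ¬ (x = u ∨ G.Adj x u)

/-- `A` and `B` are weakly `k`-hyper-connected: for every `S ⊆ V \ {A,B}` with
`|S| < k` there is a path from `A` to `B` avoiding `S` such that for every
edge `{x, y}` of the path, `N[x] ∩ S = ∅` or `N[y] ∩ S = ∅`. -/
def WeaklyHyperConnected {V : Type*} (G : SimpleGraph V) (A B : V) (k : ℕ) : Prop :=
  ∀ S : Finset V, A ∉ S → B ∉ S → S.card < k →
    ∃ p : G.Walk A B, p.IsPath ∧ (∀ v ∈ p.support, v ∉ S) ∧
      p.support.Chain' (fun x y => ClosedNbhdDisj G S x ∨ ClosedNbhdDisj G S y)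

/-- `A` and `B` are `k`-connected: there exist `k` pairwise internally
disjoint paths between `A` and `B`. -/
def KConnected {V : Type*} (G : SimpleGraph V) (A B : V) (k : ℕ) : Prop :=
  ∃ p : Fin k → G.Walk A B,
    (∀ i, (p i).IsPath) ∧
    ∀ i j, i ≠ j → ∀ v, v ∈ (p i).support → v ∈ (p j).support → v = A ∨ v = B

/-!
Weak `k`-hyper-connectivity is only used through its consequence that no set of fewer than `k`
vertices other than `A`, `B` meets every `A`–`B` path; the theorem is then Menger's theorem.

Menger's theorem is proved in its set form, by induction on the edges (Diestel's third proof).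
If deleting an edge `xy` keeps every `A`–`B` separator of size at least `k`, induction applies.
Otherwise `G - xy` has a separator `X` with `|X| < k`, and one endpoint, say `x`, is reachable
from `A` avoiding `X` in `G - xy`, the other one from `B`. Then every separator of `A` from
`insert x X` in `G - xy`, and of `insert y X` from `B`, separates `A` from `B` in `G`, so induction
gives `k` disjoint paths from `A` to `insert x X` and from `insert y X` to `B`. They lie on
opposite sides of `X`, and joining them through `X` and the edge `xy` gives the `k` paths.
The vertex form follows by applying the set form to `N(A)` and `N(B)` in `G` with all edges at
`A` and `B` deleted.
-/

namespace SimpleGraph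

variable {V : Type*} {G H : SimpleGraph V} {A B C T X Z : Set V} {k : ℕ} {a b c u v w x y : V}

theorem Walk.IsPath.append {p : G.Walk u v} {q : G.Walk v w} (hp : p.IsPath) (hq : q.IsPath)
    (hpq : ∀ x ∈ p.support, x ∈ q.support → x = v) : (p.append q).IsPath := by
  rw [Walk.isPath_def, Walk.support_append, List.nodup_append]
  refine ⟨hp.support_nodup, hq.support_nodup.sublist (List.tail_sublist _), ?_⟩
  rintro x hx _ hx' rfl
  obtain rfl := hpq x hx (List.mem_of_mem_tail hx')
  have hnodup := hq.support_nodup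
  rw [← Walk.cons_tail_support] at hnodup
  exact (List.nodup_cons.1 hnodup).1 hx'

theorem Walk.eq_of_mem_support_of_forall_not_adj (p : G.Walk u v) (hc : ∀ w, ¬ G.Adj c w)
    (h : c ∈ p.support) : c = u := by
  induction p with
  | nil => simpa using h
  | cons huw p ih =>
    rw [Walk.support_cons, List.mem_cons] at h
    exact h.resolve_right fun h' => hc _ (by rw [ih h']; exact huw.symm)

def reachAvoiding (G : SimpleGraph V) (A X : Set V) : Set V :=
  {v | ∃ a ∈ A, ∃ p : G.Walk a v, ∀ w ∈ p.support, w ∉ X}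

def Separates (G : SimpleGraph V) (A B X : Set V) : Prop :=
  ∀ a ∈ A, ∀ b ∈ B, ∀ p : G.Walk a b, ∃ v ∈ p.support, v ∈ X

theorem mem_reachAvoiding_of_mem (ha : a ∈ A) (haX : a ∉ X) : a ∈ G.reachAvoiding A X :=
  ⟨a, ha, .nil, by simpa⟩

theorem notMem_of_mem_reachAvoiding (hv : v ∈ G.reachAvoiding A X) : v ∉ X := by
  obtain ⟨a, -, p, hp⟩ := hv
  exact hp v p.end_mem_support

theorem mem_reachAvoiding_of_adj (hu : u ∈ G.reachAvoiding A X) (huv : G.Adj u v) (hv : v ∉ X) :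
    v ∈ G.reachAvoiding A X := by
  obtain ⟨a, ha, p, hp⟩ := hu
  refine ⟨a, ha, p.concat huv, fun w hw => ?_⟩
  rw [Walk.support_concat, List.mem_append, List.mem_singleton] at hw
  exact hw.elim (hp w) (· ▸ hv)

theorem reachAvoiding_subset (hA : ∀ a ∈ A, a ∉ X → a ∈ C)
    (hC : ∀ u v, u ∈ C → G.Adj u v → v ∉ X → v ∈ C) : G.reachAvoiding A X ⊆ C := by
  suffices key : ∀ {u v} (p : G.Walk u v), u ∈ C → (∀ w ∈ p.support, w ∉ X) → v ∈ C by
    rintro v ⟨a, ha, p, hp⟩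
    exact key p (hA a ha (hp a p.start_mem_support)) hp
  intro u v p
  induction p with
  | nil => exact fun hu _ => hu
  | cons huv p ih =>
    intro hu hp
    exact ih (hC _ _ hu huv (hp _ (by simp))) fun w hw => hp w (by simp [hw])

theorem separates_iff_disjoint : G.Separates A B X ↔ Disjoint (G.reachAvoiding A X) B := by
  simp only [Separates, Set.disjoint_left, reachAvoiding, Set.mem_ofPred_eq]
  constructor
  · rintro h b ⟨a, ha, p, hp⟩ hb
    obtain ⟨v, hv, hvX⟩ := h a ha b hb p
    exact hp v hv hvX
  · intro h a ha b hb p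
    by_contra! hp
    exact h ⟨a, ha, p, hp⟩ hb

theorem Separates.symm (h : G.Separates A B X) : G.Separates B A X := fun b hb a ha p => by
  simpa using h a ha b hb p.reverse

theorem Separates.disjoint_reachAvoiding (h : G.Separates A B X) :
    Disjoint (G.reachAvoiding A X) (G.reachAvoiding B X) := by
  rw [Set.disjoint_left]
  rintro v ⟨a, ha, p, hp⟩ ⟨b, hb, q, hq⟩
  obtain ⟨w, hw, hwX⟩ := h a ha b hb (p.append q.reverse)
  rw [Walk.mem_support_append_iff, Walk.support_reverse, List.mem_reverse] at hw
  exact hw.elim (hp w · hwX) (hq w · hwX)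

theorem Walk.IsPath.mem_reachAvoiding {p : G.Walk u w} (hp : p.IsPath)
    (hu : u ≠ w → u ∈ G.reachAvoiding A X) (hX : ∀ v ∈ p.support, v ∈ X → v = w) :
    ∀ v ∈ p.support, v ≠ w → v ∈ G.reachAvoiding A X := by
  induction p with
  | nil => simp_all
  | @cons u u' w huu' p ih =>
    have huw : u ≠ w := fun h => (Walk.cons_isPath_iff huu' p).1 hp |>.2 (h ▸ p.end_mem_support)
    intro v hv hvw
    rw [Walk.support_cons, List.mem_cons] at hv
    rcases hv with rfl | hv
    · exact hu hvw
    · refine ih hp.of_cons (fun hu'w => mem_reachAvoiding_of_adj (hu huw) huu' fun hu'X => ?_)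
        (fun v hv => hX v (by simp [hv])) v hv hvw
      exact hu'w (hX u' (by simp) hu'X)

theorem Walk.exists_mem_reachAvoiding_deleteEdges {e : Sym2 V} (p : G.Walk a b)
    (ha : a ∈ A) (hp : ∀ v ∈ p.support, v ∉ X)
    (hb : b ∉ (G.deleteEdges {e}).reachAvoiding A X) :
    ∃ x ∈ e, x ∈ (G.deleteEdges {e}).reachAvoiding A X := by
  obtain ⟨d, hd, hfst, hsnd⟩ :=
    p.exists_boundary_dart _ (mem_reachAvoiding_of_mem ha (hp a p.start_mem_support)) hb
  have hde : d.edge = e := by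
    by_contra hne
    refine hsnd (mem_reachAvoiding_of_adj hfst ?_ (hp _ (p.dart_snd_mem_support_of_mem_darts hd)))
    exact (deleteEdges_adj ..).2 ⟨d.adj, fun h => hne (Set.mem_singleton_iff.1 h)⟩
  exact ⟨d.fst, hde ▸ Sym2.mem_mk_left _ _, hfst⟩

theorem Separates.exists_eq_mk_of_deleteEdges {e : Sym2 V}
    (hX : (G.deleteEdges {e}).Separates A B X) (hGX : ¬ G.Separates A B X) :
    ∃ x y, e = s(x, y) ∧ x ∈ (G.deleteEdges {e}).reachAvoiding A X ∧
      y ∈ (G.deleteEdges {e}).reachAvoiding B X := by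
  simp only [Separates, not_forall, not_exists, not_and] at hGX
  obtain ⟨a, ha, b, hb, p, hp⟩ := hGX
  obtain ⟨x, hxe, hx⟩ := p.exists_mem_reachAvoiding_deleteEdges ha hp
    (Set.disjoint_right.1 (separates_iff_disjoint.1 hX) hb)
  obtain ⟨y, hye, hy⟩ := p.reverse.exists_mem_reachAvoiding_deleteEdges hb (by simpa using hp)
    (Set.disjoint_right.1 (separates_iff_disjoint.1 hX.symm) ha)
  have hxy : x ≠ y := fun h => Set.disjoint_left.1 hX.disjoint_reachAvoiding hx (h ▸ hy)
  exact ⟨x, y, (Sym2.mem_and_mem_iff hxy).1 ⟨hxe, hye⟩, hx, hy⟩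

/-- A walk from `A` avoiding `Z` stays among the vertices reachable from `A` in `G - xy` avoiding
both `Z` and `X`: it cannot leave them along `xy`, as `x ∈ insert x X` and `y` is on the `B`-side.
-/
theorem Separates.of_deleteEdges_insert (hX : (G.deleteEdges {s(x, y)}).Separates A B X)
    (hy : y ∈ (G.deleteEdges {s(x, y)}).reachAvoiding B X)
    (hZ : (G.deleteEdges {s(x, y)}).Separates A (insert x X) Z) : G.Separates A B Z := by
  set G' := G.deleteEdges {s(x, y)}
  have hZx := Set.disjoint_left.1 (separates_iff_disjoint.1 hZ)
  have hsub : G.reachAvoiding A Z ⊆ G'.reachAvoiding A Z ∩ G'.reachAvoiding A X := by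
    apply reachAvoiding_subset
    · intro a ha haZ
      have haZ' := mem_reachAvoiding_of_mem (G := G') ha haZ
      exact ⟨haZ', mem_reachAvoiding_of_mem ha fun haX => hZx haZ' (Set.mem_insert_of_mem _ haX)⟩
    · rintro u v ⟨huZ, huX⟩ huv hvZ
      have hne : s(u, v) ≠ s(x, y) := by
        intro h
        rcases Sym2.eq_iff.1 h with ⟨rfl, -⟩ | ⟨rfl, -⟩
        · exact hZx huZ (Set.mem_insert _ _)
        · exact Set.disjoint_left.1 hX.disjoint_reachAvoiding huX hy
      have huv' : G'.Adj u v :=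
        (deleteEdges_adj ..).2 ⟨huv, fun h => hne (Set.mem_singleton_iff.1 h)⟩
      have hvZ' := mem_reachAvoiding_of_adj huZ huv' hvZ
      exact ⟨hvZ', mem_reachAvoiding_of_adj huX huv' fun hvX =>
        hZx hvZ' (Set.mem_insert_of_mem _ hvX)⟩
  exact separates_iff_disjoint.2 <|
    Set.disjoint_of_subset_left (hsub.trans Set.inter_subset_right) (separates_iff_disjoint.1 hX)

theorem separates_inter_of_edgeSet_eq_empty (hG : G.edgeSet = ∅) : G.Separates A B (A ∩ B) := by
  intro a ha b hb p
  cases p with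
  | nil => exact ⟨a, by simp, ha, hb⟩
  | cons h _ => exact absurd (G.mem_edgeSet.2 h) (hG ▸ Set.notMem_empty _)

structure DisjointPaths (G : SimpleGraph V) (A B : Set V) (k : ℕ) where
  src : Fin k → V
  tgt : Fin k → V
  walk : ∀ i, G.Walk (src i) (tgt i)
  isPath : ∀ i, (walk i).IsPath
  src_mem : ∀ i, src i ∈ A
  tgt_mem : ∀ i, tgt i ∈ B
  disjoint : Pairwise fun i j => ∀ v ∈ (walk i).support, v ∉ (walk j).support

namespace DisjointPaths

variable (P : G.DisjointPaths A B k)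

def reverse : G.DisjointPaths B A k where
  src := P.tgt
  tgt := P.src
  walk i := (P.walk i).reverse
  isPath i := (P.isPath i).reverse
  src_mem := P.tgt_mem
  tgt_mem := P.src_mem
  disjoint i j hij v := by simpa using P.disjoint hij v

def mapLe (h : G ≤ H) : H.DisjointPaths A B k where
  src := P.src
  tgt := P.tgt
  walk i := (P.walk i).mapLe h
  isPath i := (P.isPath i).mapLe h
  src_mem := P.src_mem
  tgt_mem := P.tgt_mem
  disjoint i j hij v := by simpa [Walk.support_mapLe_eq_support] using P.disjoint hij v

@[simp]
theorem support_reverse_walk (i : Fin k) :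
    (P.reverse.walk i).support = (P.walk i).support.reverse :=
  Walk.support_reverse _

@[simp]
theorem support_mapLe_walk (h : G ≤ H) (i : Fin k) :
    ((P.mapLe h).walk i).support = (P.walk i).support :=
  Walk.support_mapLe_eq_support h _

theorem tgt_injective : Function.Injective P.tgt := fun i j hij => by
  by_contra hne
  exact P.disjoint hne _ (P.walk i).end_mem_support
    (by rw [hij]; exact (P.walk j).end_mem_support)

theorem exists_extend (hxy : G.Adj x y) (hy : ∀ i, y ∉ (P.walk i).support)
    (hT : ∀ i, P.tgt i ≠ x → P.tgt i ∈ T) (hyT : y ∈ T) :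
    ∃ P' : G.DisjointPaths A T k,
      ∀ i, ∀ v ∈ (P'.walk i).support, v ∈ (P.walk i).support ∨ v = y := by
  have key : ∀ i, ∃ t ∈ T, ∃ p : G.Walk (P.src i) t, p.IsPath ∧
      ∀ v ∈ p.support, v ∈ (P.walk i).support ∨ (P.tgt i = x ∧ v = y) := by
    intro i
    by_cases hx : P.tgt i = x
    · refine ⟨y, hyT, ((P.walk i).copy rfl hx).concat hxy,
        ((Walk.isPath_copy _ _ _).2 (P.isPath i)).concat (by simpa using hy i) hxy, fun v hv => ?_⟩
      rw [Walk.support_concat, Walk.support_copy, List.mem_append, List.mem_singleton] at hv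
      exact hv.imp_right fun hvy => ⟨hx, hvy⟩
    · exact ⟨P.tgt i, hT i hx, P.walk i, P.isPath i, fun v hv => .inl hv⟩
  choose t ht p hp hsupp using key
  refine ⟨⟨P.src, t, p, hp, P.src_mem, ht, fun i j hij v hvi hvj => ?_⟩,
    fun i v hv => (hsupp i v hv).imp_right And.right⟩
  rcases hsupp i v hvi with hvi | ⟨hi, rfl⟩ <;> rcases hsupp j v hvj with hvj | ⟨hj, hvy⟩
  · exact P.disjoint hij v hvi hvj
  · exact hy i (hvy ▸ hvi)
  · exact hy j hvj
  · exact hij (P.tgt_injective (hi.trans hj.symm))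

variable [Finite V]

theorem range_tgt (hk : B.ncard ≤ k) : Set.range P.tgt = B :=
  Set.eq_of_subset_of_ncard_le (Set.range_subset_iff.2 P.tgt_mem)
    (by rwa [Set.ncard_range_of_injective P.tgt_injective, Nat.card_fin])

theorem eq_tgt_of_mem (hk : B.ncard ≤ k) {i : Fin k} (hv : v ∈ (P.walk i).support) (hvB : v ∈ B) :
    v = P.tgt i := by
  obtain ⟨j, rfl⟩ := (P.range_tgt hk).symm ▸ hvB
  by_contra hne
  exact P.disjoint (fun h => hne (congrArg P.tgt h)) _ (P.walk j).end_mem_support hv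

theorem mem_reachAvoiding (hk : B.ncard ≤ k) (hXB : X ⊆ B) {i : Fin k}
    (hv : v ∈ (P.walk i).support) (hne : v ≠ P.tgt i) : v ∈ G.reachAvoiding A X :=
  (P.isPath i).mem_reachAvoiding
    (fun h => mem_reachAvoiding_of_mem (P.src_mem i) fun hX =>
      h (P.eq_tgt_of_mem hk (P.walk i).start_mem_support (hXB hX)))
    (fun _ hw hwX => P.eq_tgt_of_mem hk hw (hXB hwX)) v hv hne

theorem nonempty_of_le_ncard_inter (hk : k ≤ (A ∩ B).ncard) :
    Nonempty (G.DisjointPaths A B k) := by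
  obtain ⟨S, hS, hSk⟩ := Set.exists_subset_card_eq hk
  let e : Fin k ≃ S := (Finite.equivFinOfCardEq (by rwa [Nat.card_coe_set_eq])).symm
  exact ⟨⟨fun i => e i, fun i => e i, fun _ => .nil, fun _ => .nil, fun i => (hS (e i).2).1,
    fun i => (hS (e i).2).2, fun i j hij v hvi hvj => by
      simp only [Walk.support_nil, List.mem_singleton] at hvi hvj
      exact hij (e.injective (Subtype.ext (hvi.symm.trans hvj)))⟩⟩

end DisjointPaths

theorem DisjointPaths.nonempty_append [Finite V] (P : G.DisjointPaths A T k)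
    (Q : G.DisjointPaths T B k) (hk : T.ncard ≤ k)
    (hPQ : ∀ i j, ∀ v ∈ (P.walk i).support, v ∈ (Q.walk j).support → v ∈ T) :
    Nonempty (G.DisjointPaths A B k) := by
  have hσ : ∀ i, ∃ j, Q.src j = P.tgt i := fun i => (Q.reverse.range_tgt hk).ge (P.tgt_mem i)
  choose σ hσ using hσ
  have hσinj : Function.Injective σ := fun i j h => P.tgt_injective (by rw [← hσ i, ← hσ j, h])
  have hmeet : ∀ i j, ∀ v ∈ (P.walk i).support, v ∈ (Q.walk (σ j)).support →
      v = P.tgt i ∧ i = j := by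
    intro i j v hvi hvj
    have hvT := hPQ i (σ j) v hvi hvj
    have hv : v = P.tgt i := P.eq_tgt_of_mem hk hvi hvT
    refine ⟨hv, P.tgt_injective ?_⟩
    rw [← hv, ← hσ j]
    exact Q.reverse.eq_tgt_of_mem hk (by simpa [reverse] using hvj) hvT
  refine ⟨⟨P.src, fun i => Q.tgt (σ i),
    fun i => (P.walk i).append ((Q.walk (σ i)).copy (hσ i) rfl), fun i => ?_, P.src_mem,
    fun i => Q.tgt_mem _, fun i j hij v hvi hvj => ?_⟩⟩
  · exact (P.isPath i).append ((Walk.isPath_copy _ _ _).2 (Q.isPath _)) fun v hv hv' =>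
      (hmeet i i v hv (by simpa using hv')).1
  · simp only [Walk.mem_support_append_iff, Walk.support_copy] at hvi hvj
    rcases hvi with hvi | hvi <;> rcases hvj with hvj | hvj
    · exact P.disjoint hij v hvi hvj
    · exact hij (hmeet i j v hvi hvj).2
    · exact hij (hmeet j i v hvj hvi).2.symm
    · exact Q.disjoint (hσinj.ne hij) v hvi hvj

/-- Except for its last vertex, a path of `P` runs on the `A`-side of `X` in `G - xy`, and except
for its first vertex, a path of `Q` on the `B`-side. After the path of `P` ending at `x` is extended
by `xy`, the two families meet exactly in `insert y X` and can be joined there. -/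
theorem nonempty_disjointPaths_of_deleteEdges [Finite V] (hxy : G.Adj x y)
    (hX : (G.deleteEdges {s(x, y)}).Separates A B X)
    (hx : x ∈ (G.deleteEdges {s(x, y)}).reachAvoiding A X)
    (hy : y ∈ (G.deleteEdges {s(x, y)}).reachAvoiding B X) (hXk : X.ncard < k)
    (P : (G.deleteEdges {s(x, y)}).DisjointPaths A (insert x X) k)
    (Q : (G.deleteEdges {s(x, y)}).DisjointPaths B (insert y X) k) :
    Nonempty (G.DisjointPaths A B k) := by
  have hle : G.deleteEdges {s(x, y)} ≤ G := deleteEdges_le _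
  have hAB := Set.disjoint_left.1 hX.disjoint_reachAvoiding
  have hP : ∀ i, ∀ v ∈ (P.walk i).support,
      v ∈ (G.deleteEdges {s(x, y)}).reachAvoiding A X ∨ v ∈ insert x X := fun i v hv =>
    (em (v = P.tgt i)).elim (fun h => .inr (h ▸ P.tgt_mem i)) fun h =>
      .inl (P.mem_reachAvoiding ((Set.ncard_insert_le x X).trans hXk) (Set.subset_insert _ _) hv h)
  have hQ : ∀ i, ∀ v ∈ (Q.walk i).support,
      v ∈ (G.deleteEdges {s(x, y)}).reachAvoiding B X ∨ v ∈ insert y X := fun i v hv =>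
    (em (v = Q.tgt i)).elim (fun h => .inr (h ▸ Q.tgt_mem i)) fun h =>
      .inl (Q.mem_reachAvoiding ((Set.ncard_insert_le y X).trans hXk) (Set.subset_insert _ _) hv h)
  have hyP : ∀ i, y ∉ (P.walk i).support := fun i hyi => by
    rcases hP i y hyi with hyA | rfl | hyX
    · exact hAB hyA hy
    · exact hxy.ne rfl
    · exact notMem_of_mem_reachAvoiding hy hyX
  obtain ⟨P', hP'⟩ := (P.mapLe hle).exists_extend hxy (by simpa using hyP)
    (fun i hi => Set.mem_insert_of_mem _ ((P.tgt_mem i).resolve_left hi)) (Set.mem_insert _ _)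
  refine P'.nonempty_append (Q.mapLe hle).reverse ((Set.ncard_insert_le y X).trans hXk)
    fun i j v hvi hvj => ?_
  rw [DisjointPaths.support_reverse_walk, DisjointPaths.support_mapLe_walk, List.mem_reverse] at hvj
  rcases hP' i v hvi with hvi | rfl
  · rw [DisjointPaths.support_mapLe_walk] at hvi
    refine (hQ j v hvj).resolve_left fun hvB => ?_
    rcases hP i v hvi with hvA | rfl | hvX
    · exact hAB hvA hvB
    · exact hAB hx hvB
    · exact notMem_of_mem_reachAvoiding hvB hvX
  · exact Set.mem_insert _ _

theorem nonempty_disjointPaths [Finite V] (G : SimpleGraph V) (A B : Set V) (k : ℕ)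
    (h : ∀ X, G.Separates A B X → k ≤ X.ncard) : Nonempty (G.DisjointPaths A B k) := by
  induction G using WellFoundedLT.induction generalizing A B with
  | _ G ih =>
  rcases G.edgeSet.eq_empty_or_nonempty with hG | ⟨e, he⟩
  · exact DisjointPaths.nonempty_of_le_ncard_inter (h _ (separates_inter_of_edgeSet_eq_empty hG))
  have hlt : G.deleteEdges {e} < G :=
    (deleteEdges_le _).lt_of_ne fun h =>
      (by simpa [deleteEdges_eq_self] using h : e ∉ G.edgeSet) he
  by_cases hsep : ∀ X, (G.deleteEdges {e}).Separates A B X → k ≤ X.ncard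
  · exact (ih _ hlt A B hsep).map (·.mapLe (deleteEdges_le _))
  push Not at hsep
  obtain ⟨X, hX, hXk⟩ := hsep
  obtain ⟨x, y, rfl, hx, hy⟩ := hX.exists_eq_mk_of_deleteEdges fun hGX => (h X hGX).not_gt hXk
  obtain ⟨P⟩ := ih _ hlt A (insert x X) fun Z hZ => h Z (hX.of_deleteEdges_insert hy hZ)
  obtain ⟨Q⟩ := ih _ hlt B (insert y X) fun Z hZ => h Z <| Separates.symm <|
    Separates.of_deleteEdges_insert (x := y) (y := x) (X := X)
      (by rw [Sym2.eq_swap]; exact hX.symm) (by rwa [Sym2.eq_swap]) (by rwa [Sym2.eq_swap])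
  exact nonempty_disjointPaths_of_deleteEdges he hX hx hy hXk P Q

end SimpleGraph

section

variable {V : Type*} {G : SimpleGraph V} {a b : V} {k : ℕ}

/-- As `a` and `b` are isolated in `(G.deleteIncidenceSet a).deleteIncidenceSet b`, the vertices
reachable from `a` in `G` avoiding `X \ {a, b}` are `a` and those reachable from `N(a)` avoiding `X`
in that graph, and `b` is not among them. -/
theorem le_ncard_of_separates_neighborSet [Finite V] (hab : a ≠ b) (hnadj : ¬ G.Adj a b)
    (h : ∀ S : Finset V, a ∉ S → b ∉ S → S.card < k → ∃ p : G.Walk a b, ∀ v ∈ p.support, v ∉ S)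
    {X : Set V} (hX : ((G.deleteIncidenceSet a).deleteIncidenceSet b).Separates
      (G.neighborSet a) (G.neighborSet b) X) : k ≤ X.ncard := by
  set H := (G.deleteIncidenceSet a).deleteIncidenceSet b
  have hH : ∀ u v, H.Adj u v ↔ G.Adj u v ∧ u ≠ a ∧ v ≠ a ∧ u ≠ b ∧ v ≠ b := by
    simp only [H, deleteIncidenceSet_adj]; tauto
  set R := H.reachAvoiding (G.neighborSet a) X
  have hR : ∀ u ∈ R, u ≠ a ∧ u ≠ b := by
    rintro u ⟨w, hw, p, -⟩
    have hu : u = a ∨ u = b → u = w := fun hu => p.eq_of_mem_support_of_forall_not_adj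
      (fun v hv => by have := (hH u v).1 hv; tauto) p.end_mem_support
    have hw : G.Adj a w := hw
    refine ⟨fun hua => G.irrefl (v := a) ?_, fun hub => hnadj ?_⟩
    · rwa [← hu (.inl hua), hua] at hw
    · rwa [← hu (.inr hub), hub] at hw
  by_contra! hlt
  obtain ⟨p, hp⟩ := h (X \ {a, b}).toFinite.toFinset (by simp) (by simp)
    (by rw [← Set.ncard_eq_toFinset_card]; exact (Set.ncard_le_ncard Set.sdiff_subset).trans_lt hlt)
  have hb : b ∈ G.reachAvoiding {a} (X \ {a, b}) := ⟨a, rfl, p, fun v hv => by simpa using hp v hv⟩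
  have hsub : G.reachAvoiding {a} (X \ {a, b}) ⊆ insert a R := by
    refine reachAvoiding_subset (by rintro _ rfl -; exact Set.mem_insert _ _) ?_
    rintro u v (rfl | hu) huv hv
    · refine Or.inr (mem_reachAvoiding_of_mem huv fun hvX => hv ⟨hvX, ?_⟩)
      rintro (rfl | rfl)
      exacts [G.irrefl huv, hnadj huv]
    · obtain ⟨hua, hub⟩ := hR u hu
      by_cases hva : v = a
      · exact .inl hva
      by_cases hvb : v = b
      · subst hvb
        exact absurd huv.symm (Set.disjoint_left.1 (separates_iff_disjoint.1 hX) hu)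
      · exact .inr (mem_reachAvoiding_of_adj hu ((hH u v).2 ⟨huv, hua, hva, hub, hvb⟩)
          fun hvX => hv ⟨hvX, by simp [hva, hvb]⟩)
  rcases hsub hb with hba | hbR
  · exact hab hba.symm
  · exact (hR b hbR).2 rfl

theorem kConnected_of_disjointPaths (hab : a ≠ b)
    (P : ((G.deleteIncidenceSet a).deleteIncidenceSet b).DisjointPaths
      (G.neighborSet a) (G.neighborSet b) k) : KConnected G a b k := by
  set H := (G.deleteIncidenceSet a).deleteIncidenceSet b
  have hHG : H ≤ G := (deleteIncidenceSet_le _ _).trans (deleteIncidenceSet_le _ _)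
  have hsrc : ∀ i, G.Adj a (P.src i) := P.src_mem
  have htgt : ∀ i, G.Adj (P.tgt i) b := fun i => (P.tgt_mem i).symm
  have haP : ∀ i, a ∉ (P.walk i).support := fun i h => by
    have hai := hsrc i
    rw [← (P.walk i).eq_of_mem_support_of_forall_not_adj
      (fun v hv => by simp [H, deleteIncidenceSet_adj] at hv) h] at hai
    exact G.irrefl hai
  have hbP : ∀ i, b ∉ (P.walk i).support := fun i h => by
    have hib := htgt i
    rw [← (P.walk i).reverse.eq_of_mem_support_of_forall_not_adj (c := b)
      (fun v hv => by simp [H, deleteIncidenceSet_adj] at hv) (by simpa using h)] at hib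
    exact G.irrefl hib
  refine ⟨fun i => .cons (hsrc i) (((P.walk i).mapLe hHG).concat (htgt i)),
    fun i => ?_, fun i j hij v hvi hvj => ?_⟩
  · refine Walk.IsPath.cons (((P.isPath i).mapLe hHG).concat ?_ _) ?_
    · simpa [Walk.support_mapLe_eq_support] using hbP i
    · simpa [Walk.support_concat, Walk.support_mapLe_eq_support, hab] using haP i
  · simp only [Walk.support_cons, Walk.support_concat, Walk.support_mapLe_eq_support,
      List.mem_cons, List.mem_append, List.not_mem_nil, or_false] at hvi hvj
    rcases hvi with rfl | hvi | rfl
    · exact .inl rfl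
    · rcases hvj with rfl | hvj | rfl
      · exact .inl rfl
      · exact absurd hvj (P.disjoint hij v hvi)
      · exact .inr rfl
    · exact .inr rfl

theorem kConnected_of_forall_exists_walk [Finite V] (hab : a ≠ b) (hnadj : ¬ G.Adj a b)
    (h : ∀ S : Finset V, a ∉ S → b ∉ S → S.card < k → ∃ p : G.Walk a b, ∀ v ∈ p.support, v ∉ S) :
    KConnected G a b k :=
  have ⟨P⟩ := nonempty_disjointPaths _ _ _ k fun _ hX =>
    le_ncard_of_separates_neighborSet hab hnadj h hX
  kConnected_of_disjointPaths hab P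

end

theorem weaklyHyperConnected_imp_kConnected_general
    {V : Type*} [Fintype V] (G : SimpleGraph V)
    (A B : V) (hAB : A ≠ B) (hNotAdj : ¬ G.Adj A B) (k : ℕ)
    (h : WeaklyHyperConnected G A B k) :
    KConnected G A B k :=
  kConnected_of_forall_exists_walk hAB hNotAdj fun S hA hB hS =>
    (h S hA hB hS).imp fun _ hp => hp.2.1

/-- Weak `k`-hyper-connectivity implies `k`-connectivity (for non-adjacent
`A`, `B`). -/
theorem weaklyHyperConnected_imp_kConnected
    {V : Type*} [Fintype V] [DecidableEq V] (G : SimpleGraph V)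
    (A B : V) (hAB : A ≠ B) (hNotAdj : ¬ G.Adj A B) (k : ℕ) (hk : 1 ≤ k)
    (h : WeaklyHyperConnected G A B k) :
    KConnected G A B k :=
  weaklyHyperConnected_imp_kConnected_general G A B hAB hNotAdj k h
end

section
/- Let G be the finite simple graph on the four vertices {A, B, C, D} whose edges are exactly {A,C}, {C,B}, {A,D}, {D,B}, {C,D}. Then A and B are 2-connected in G (there are 2 internally disjoint paths between A and B), but A and B are not weakly 2-hyper-connected in G. -/
open SimpleGraph

/-- The graph of Example 1: vertices `A = 0`, `B = 1`, `C = 2`, `D = 3` and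
edges `{A,C}, {C,B}, {A,D}, {D,B}, {C,D}`. -/
def exGraph4 : SimpleGraph (Fin 4) :=
  SimpleGraph.fromRel (fun x y =>
    (x, y) ∈ [((0 : Fin 4), (2 : Fin 4)), (2, 1), (0, 3), (3, 1), (2, 3)])

lemma adj02 : exGraph4.Adj 0 2 := by simp [exGraph4]
lemma adj21 : exGraph4.Adj 2 1 := by simp [exGraph4]
lemma adj03 : exGraph4.Adj 0 3 := by simp [exGraph4]
lemma adj31 : exGraph4.Adj 3 1 := by simp [exGraph4]
lemma adj32 : exGraph4.Adj 3 2 := by simp [exGraph4]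

/-- In the graph of Example 1, `A` and `B` are 2-connected but not weakly
2-hyper-connected. -/
theorem exGraph4_twoConnected_not_weaklyHyperConnected :
    KConnected exGraph4 0 1 2 ∧ ¬ WeaklyHyperConnected exGraph4 0 1 2 := by
  constructor
  · -- two paths 0-2-1 and 0-3-1
    refine ⟨fun i => if i = 0 then Walk.cons adj02 (Walk.cons adj21 Walk.nil)
      else Walk.cons adj03 (Walk.cons adj31 Walk.nil), ?_, ?_⟩
    · intro i
      by_cases h : i = 0 <;> simp [h, Walk.isPath_def] <;> decide
    · intro i j hij v hvi hvj
      fin_cases i <;> fin_cases j <;>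
        first
        | exact absurd rfl hij
        | (simp [Walk.support] at hvi hvj
           rcases hvi with h | h | h <;> rcases hvj with h' | h' | h' <;> simp_all)
  · intro h
    obtain ⟨p, hp, hav, hch⟩ := h {2} (by decide) (by decide) (by decide)
    -- p avoids vertex 2, so its first step is 0-3
    cases p with
    | cons hadj q =>
      rename_i v
      have hv23 : v = 2 ∨ v = 3 := by
        simp only [exGraph4, fromRel_adj, List.mem_cons] at hadj
        rcases hadj with ⟨-, h | h⟩ <;> simp_all <;> tauto
      have hv : v = 3 := by
        rcases hv23 with h | h
        · exfalso; exact hav v (by simp [Walk.support_cons]) (by simp [h])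
        · exact h
      subst hv
      -- chain' on 0 :: 3 :: _ forces ClosedNbhdDisj at 0 or 3, both false
      rw [Walk.support_cons] at hch
      have h2 : q.support = 3 :: q.support.tail := by
        cases q <;> simp
      rw [h2] at hch
      have := hch.rel_head
      rcases this with h | h
      · exact h 2 (by simp) (Or.inr adj02)
      · exact h 2 (by simp) (Or.inr adj32)
end

section
/- Let G be the finite simple graph on the five vertices {A, B, C, D, F} whose edges are exactly {A,C}, {A,D}, {C,B}, {D,B}, {C,F}, {F,D}. Then A and B are weakly 2-hyper-connected in G, but A and B are not 2-neighbor-connected in G. -/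
open SimpleGraph

/-- `neighbor(V₁) = (V₁ ∪ N(V₁)) \ {A, B}`. -/
def neighborClosure {V : Type*} (G : SimpleGraph V) (A B : V) (V₁ : Finset V) : Set V :=
  ((↑V₁ : Set V) ∪ {v | ∃ u ∈ V₁, G.Adj u v}) \ {A, B}

/-- `A` and `B` are `k`-neighbor-connected: for every `V₁ ⊆ V \ {A,B}` with
`|V₁| < k` there is a path from `A` to `B` avoiding `neighbor(V₁)`. -/
def KNeighborConnected {V : Type*} (G : SimpleGraph V) (A B : V) (k : ℕ) : Prop :=
  ∀ V₁ : Finset V, A ∉ V₁ → B ∉ V₁ → V₁.card < k →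
    ∃ p : G.Walk A B, p.IsPath ∧ ∀ v ∈ p.support, v ∉ neighborClosure G A B V₁

/-- The graph of Example 2: vertices `A = 0`, `B = 1`, `C = 2`, `D = 3`,
`F = 4` and edges `{A,C}, {A,D}, {C,B}, {D,B}, {C,F}, {F,D}`. -/
def exGraph5 : SimpleGraph (Fin 5) :=
  SimpleGraph.fromRel (fun x y =>
    (x, y) ∈ [((0 : Fin 5), (2 : Fin 5)), (0, 3), (2, 1), (3, 1), (2, 4), (4, 3)])

/-!
For `|S| ≤ 1` a path `A – x – B` through a common neighbour `x ∈ {C, D}` always works: for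
`S = {C}` take `x = D`, whose closed neighbourhood misses `C`; otherwise take `x = C`, and then
either `N[C]` or both `N[A]` and `N[B]` miss `S`. Conversely, `V₁ = {F}` gives
`neighbor(V₁) = {C, D, F} ⊇ N(A)`, so every `A`–`B` path is blocked at its second vertex.
-/

instance : DecidableRel exGraph5.Adj := fun _ _ => by
  unfold exGraph5; rw [fromRel_adj]; infer_instance

instance {V : Type*} [DecidableEq V] (G : SimpleGraph V) [DecidableRel G.Adj] (S : Finset V)
    (x : V) : Decidable (ClosedNbhdDisj G S x) := by
  unfold ClosedNbhdDisj; infer_instance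

section
variable {V : Type*} {G : SimpleGraph V} {A B : V} {k : ℕ}

lemma weaklyHyperConnected_of_forall_exists_middle (hAB : A ≠ B)
    (h : ∀ S : Finset V, A ∉ S → B ∉ S → S.card < k → ∃ x, G.Adj A x ∧ G.Adj x B ∧ x ∉ S ∧
      (ClosedNbhdDisj G S x ∨ ClosedNbhdDisj G S A ∧ ClosedNbhdDisj G S B)) :
    WeaklyHyperConnected G A B k := by
  intro S hA hB hS
  obtain ⟨x, hAx, hxB, hx, hdisj⟩ := h S hA hB hS
  refine ⟨.cons hAx (.cons hxB .nil), ?_, ?_, ?_⟩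
  · simp [Walk.isPath_def, hAB, hAx.ne, hxB.ne]
  · simp [hA, hB, hx]
  · rcases hdisj with hx | ⟨hA, hB⟩
    · exact .cons_cons (.inr hx) (.cons_cons (.inl hx) (.singleton _))
    · exact .cons_cons (.inl hA) (.cons_cons (.inr hB) (.singleton _))

lemma not_kNeighborConnected_of_neighborSet_subset (hAB : A ≠ B) (V₁ : Finset V)
    (hA : A ∉ V₁) (hB : B ∉ V₁) (hk : V₁.card < k)
    (h : G.neighborSet A ⊆ neighborClosure G A B V₁) : ¬ KNeighborConnected G A B k := by
  intro hconn
  obtain ⟨p, -, hp⟩ := hconn V₁ hA hB hk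
  have hp_not_nil : ¬ p.Nil := Walk.not_nil_of_ne hAB
  exact hp p.snd (List.mem_of_mem_tail (Walk.snd_mem_tail_support hp_not_nil))
    (h (p.adj_snd hp_not_nil))

end

set_option synthInstance.maxSize 1000 in
/-- In the graph of Example 2, `A` and `B` are weakly 2-hyper-connected but
not 2-neighbor-connected. -/
theorem exGraph5_weaklyHyperConnected_not_twoNeighborConnected :
    WeaklyHyperConnected exGraph5 0 1 2 ∧ ¬ KNeighborConnected exGraph5 0 1 2 := by
  refine ⟨weaklyHyperConnected_of_forall_exists_middle (by decide) (by decide),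
    not_kNeighborConnected_of_neighborSet_subset (by decide) {4} (by decide) (by decide)
      (by decide) ?_⟩
  intro v hv
  obtain rfl | rfl : v = 2 ∨ v = 3 := by revert v; decide
  all_goals exact ⟨.inr ⟨4, Finset.mem_singleton_self _, by decide⟩, by simp⟩
end

section
/- Let F be a type with decidable equality, n, k, t natural numbers with k ≤ n, C ⊆ (Fin n → F) a nonempty set of codewords, M a type of secrets, and σ : C → M. Suppose the scheme has k-privacy in the combinatorial sense: for every c ∈ C, every set T ⊆ Fin n with |T| ≤ k, and every secret m in the image of σ, there exists c' ∈ C with σ c' = m and c' i = c i for all i ∈ T. Suppose moreover that σ takes at least two distinct values on C. If 2t ≥ n − k, then there exist codewords c₁, c₂ ∈ C with σ c₁ ≠ σ c₂ and a word w : Fin n → F with hammingDist w c₁ ≤ t and hammingDist w c₂ ≤ t. Consequently no decoding rule can correct t errors, so the maximum number of errors that a (k+1)-out-of-n secret sharing scheme can correct is at most ⌊(n−k−1)/2⌋; in particular, a (k+1)-out-of-(3k−2u) scheme with u ≥ 1 cannot correct k − u errors. -/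
/-!
Privacy lets us replace one codeword by another carrying a different secret while keeping `k`
chosen coordinates fixed, so two codewords with distinct secrets differ in at most `n - k ≤ 2t`
places. Copying half of those differing coordinates from one into the other gives a word within
distance `t` of both.
-/

open Finset

section HammingMidpoint

variable {ι : Type*} [Fintype ι] {β : ι → Type*} [∀ i, DecidableEq (β i)]

theorem hammingDist_le_card_sub_of_eqOn {u v : ∀ i, β i} {T : Finset ι}
    (h : ∀ i ∈ T, u i = v i) : hammingDist u v ≤ Fintype.card ι - T.card := by
  classical
  rw [← card_compl]
  exact card_le_card fun i hi => mem_compl.2 fun hiT => (mem_filter.1 hi).2 (h i hiT)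

theorem exists_hammingDist_le_of_hammingDist_le_two_mul {u v : ∀ i, β i} {t : ℕ}
    (h : hammingDist u v ≤ 2 * t) : ∃ w, hammingDist w u ≤ t ∧ hammingDist w v ≤ t := by
  classical
  set D := univ.filter fun i => u i ≠ v i
  obtain ⟨S, hSD, hS⟩ := D.exists_subset_card_eq (min_le_left D.card t)
  refine ⟨S.piecewise v u, ?_, ?_⟩
  · calc hammingDist (S.piecewise v u) u ≤ S.card := card_le_card fun i hi => by
          by_contra hiS
          exact (mem_filter.1 hi).2 (piecewise_eq_of_notMem _ _ _ hiS)
      _ ≤ t := hS ▸ min_le_right _ _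
  · calc hammingDist (S.piecewise v u) v ≤ (D \ S).card := card_le_card fun i hi => by
          have hwv := (mem_filter.1 hi).2
          have hiS : i ∉ S := fun hiS => hwv (piecewise_eq_of_mem _ _ _ hiS)
          rw [piecewise_eq_of_notMem _ _ _ hiS] at hwv
          exact mem_sdiff.2 ⟨mem_filter.2 ⟨mem_univ i, hwv⟩, hiS⟩
      _ = D.card - S.card := card_sdiff_of_subset hSD
      _ ≤ t := by have : D.card ≤ 2 * t := h; omega

end HammingMidpoint

theorem secret_sharing_cannot_correct_many_errors_general
    {F : Type*} [DecidableEq F] (n k t : ℕ)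
    (C : Set (Fin n → F)) (M : Type*) (σ : C → M)
    (hpriv : ∀ c : C, ∀ T : Finset (Fin n), T.card ≤ k → ∀ m : M,
      (∃ c₀ : C, σ c₀ = m) →
      ∃ c' : C, σ c' = m ∧ ∀ i ∈ T, (c' : Fin n → F) i = (c : Fin n → F) i)
    (htwo : ∃ c₁ c₂ : C, σ c₁ ≠ σ c₂)
    (ht : n - k ≤ 2 * t) :
    ∃ c₁ c₂ : C, σ c₁ ≠ σ c₂ ∧ ∃ w : Fin n → F,
      hammingDist w (c₁ : Fin n → F) ≤ t ∧
      hammingDist w (c₂ : Fin n → F) ≤ t := by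
  obtain ⟨c₁, c₂, hne⟩ := htwo
  obtain ⟨T, -, hT⟩ := (univ : Finset (Fin n)).exists_subset_card_eq (n := min k n) (by simp)
  obtain ⟨c', hc', hagree⟩ := hpriv c₁ T (hT ▸ min_le_left k n) (σ c₂) ⟨c₂, rfl⟩
  have hdist : hammingDist (c₁ : Fin n → F) c' ≤ 2 * t :=
    calc hammingDist (c₁ : Fin n → F) c' ≤ Fintype.card (Fin n) - T.card :=
          hammingDist_le_card_sub_of_eqOn fun i hi => (hagree i hi).symm
      _ ≤ 2 * t := by rw [hT, Fintype.card_fin]; omega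
  obtain ⟨w, hw₁, hw₂⟩ := exists_hammingDist_le_of_hammingDist_le_two_mul hdist
  exact ⟨c₁, c', fun h => hne (h.trans hc'), w, hw₁, hw₂⟩

/-- A `(k+1)`-out-of-`n` secret sharing scheme with `k`-privacy cannot correct
`t` errors when `2t ≥ n - k`: there are two share vectors carrying distinct
secrets and a word within Hamming distance `t` of both. -/
theorem secret_sharing_cannot_correct_many_errors
    {F : Type*} [DecidableEq F] (n k t : ℕ) (hkn : k ≤ n)
    (C : Set (Fin n → F)) (hCne : C.Nonempty) (M : Type*) (σ : C → M)
    (hpriv : ∀ c : C, ∀ T : Finset (Fin n), T.card ≤ k → ∀ m : M,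
      (∃ c₀ : C, σ c₀ = m) →
      ∃ c' : C, σ c' = m ∧ ∀ i ∈ T, (c' : Fin n → F) i = (c : Fin n → F) i)
    (htwo : ∃ c₁ c₂ : C, σ c₁ ≠ σ c₂)
    (ht : n - k ≤ 2 * t) :
    ∃ c₁ c₂ : C, σ c₁ ≠ σ c₂ ∧ ∃ w : Fin n → F,
      hammingDist w (c₁ : Fin n → F) ≤ t ∧
      hammingDist w (c₂ : Fin n → F) ≤ t :=
  secret_sharing_cannot_correct_many_errors_general n k t C M σ hpriv htwo ht
end
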